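/- There exist a linear functional T on D(ℝ) and a smooth compactly supported function Χ : ℝ² → ℂ such that the function f : ℝ → ℂ defined by f(x) = T(y ↦ Χ(x,y)) is not continuous at 0. (Here for each fixed x ∈ ℝ, the slice y ↦ Χ(x,y) is a smooth compactly supported function ℝ → ℂ, hence an element of D(ℝ); one can achieve f(1/n) = n for all n ≥ 1 and f(0) = 0.) -/

import Mathlib

/-- `D(ℝ)`: the space of smooth compactly supported functions `ℝ → ℂ`,
as a submodule of `ℝ → ℂ`. -/
noncomputable def TestD : Submodule ℂ (ℝ → ℂ) where
  carrier := {φ | ContDiff ℝ (⊤ : ℕ∞) φ ∧ HasCompactSupport φ}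
  add_mem' hf hg := ⟨hf.1.add hg.1, hf.2.add hg.2⟩
  zero_mem' := ⟨contDiff_const, HasCompactSupport.zero⟩
  smul_mem' c f hf := ⟨hf.1.const_smul c,
    hf.2.mono (Function.support_const_smul_subset c f)⟩

lemma slice_mem (Χ : ℝ × ℝ → ℂ) (h1 : ContDiff ℝ (⊤ : ℕ∞) Χ)
    (h2 : HasCompactSupport Χ) (x : ℝ) :
    (fun y : ℝ => Χ (x, y)) ∈ TestD := by
  refine ⟨h1.comp ((contDiff_const (c := x)).prodMk contDiff_id), ?_⟩
  apply HasCompactSupport.intro (h2.image continuous_snd)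
  intro y hy
  by_contra hne
  exact hy ⟨(x, y), subset_tsupport _ hne, rfl⟩

/-!
Take `Χ(x, y) = φ(x, y) e^{xy}` with a bump `φ` equal to `1` on `[-1, 1]²`. For `|a| ≤ 1` the
slices `y ↦ Χ(a, y)` agree on `(-1, 1)` with the exponentials `y ↦ e^{ay}`; these are distinct
characters of `(ℝ, +)`, hence linearly independent, and the identity theorem for analytic functions
keeps them independent after restriction to `(-1, 1)`. So the slices are linearly independent in
`D(ℝ)`, and a linear functional may send the slice at `0` to `1` and all other slices to `0`.
-/

open Set Filter Topology Metric

theorem LinearIndependent.exists_linearMap_apply_eq {K V W ι : Type*} [Field K]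
    [AddCommGroup V] [Module K V] [AddCommGroup W] [Module K W] {v : ι → V}
    (hv : LinearIndependent K v) (w : ι → W) :
    ∃ T : V →ₗ[K] W, ∀ i, T (v i) = w i := by
  obtain ⟨T, hT⟩ := LinearMap.exists_extend ((Module.Basis.span hv).constr K w)
  refine ⟨T, fun i => ?_⟩
  simpa only [LinearMap.comp_apply, Submodule.subtype_apply, Module.Basis.coe_span_apply,
    Module.Basis.constr_basis] using congr($hT (Module.Basis.span hv i))

theorem not_continuousAt_of_eventually_eq_of_ne {X Y : Type*} [TopologicalSpace X]
    [TopologicalSpace Y] [T2Space Y] {f : X → Y} {x₀ : X} [(𝓝[≠] x₀).NeBot] {y : Y}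
    (hne : f x₀ ≠ y) (hf : ∀ᶠ x in 𝓝[≠] x₀, f x = y) : ¬ ContinuousAt f x₀ :=
  fun hcont => hne <| tendsto_nhds_unique (hcont.tendsto.mono_left nhdsWithin_le_nhds)
    (tendsto_const_nhds.congr' (EventuallyEq.symm hf))

section Analytic

variable {𝕜 E F R ι : Type*} [NontriviallyNormedField 𝕜] [NormedAddCommGroup E]
  [NormedSpace 𝕜 E] [NormedAddCommGroup F] [NormedSpace 𝕜 F] [NormedRing R] [Module R F]
  [IsBoundedSMul R F] [SMulCommClass 𝕜 R F] {f : ι → E → F}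

theorem AnalyticOnNhd.of_mem_span {s : Set E} (hf : ∀ i, AnalyticOnNhd 𝕜 (f i) s) {g : E → F}
    (hg : g ∈ Submodule.span R (range f)) : AnalyticOnNhd 𝕜 g s := by
  induction hg using Submodule.span_induction with
  | mem g hg => obtain ⟨i, rfl⟩ := hg; exact hf i
  | zero => exact analyticOnNhd_const
  | add g h _ _ hg hh => exact hg.add hh
  | smul c g _ hg => exact hg.const_smul

theorem LinearIndependent.restrict_of_analyticOnNhd [PreconnectedSpace E]
    (hli : LinearIndependent R f) (hf : ∀ i, AnalyticOnNhd 𝕜 (f i) univ) {x : E} {U : Set E}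
    (hU : U ∈ 𝓝 x) : LinearIndependent R (fun i => f i ∘ ((↑) : U → E)) := by
  refine hli.map (f := LinearMap.funLeft R F ((↑) : U → E)) ?_
  rw [Submodule.disjoint_def]
  intro g hg hker
  have hzero : EqOn g 0 univ :=
    (AnalyticOnNhd.of_mem_span hf hg).eqOn_zero_of_preconnected_of_eventuallyEq_zero
      isPreconnected_univ (mem_univ x) (eventuallyEq_of_mem hU fun y hy => congr_fun hker ⟨y, hy⟩)
  exact funext fun y => hzero (mem_univ y)

end Analytic

theorem Complex.linearIndependent_exp_ofReal_mul :
    LinearIndependent ℂ (fun (a y : ℝ) => Complex.exp (a * y)) := by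
  let χ : ℝ → Multiplicative ℝ →* ℂ := fun a =>
    { toFun := fun y => Complex.exp (a * y.toAdd)
      map_one' := by simp
      map_mul' := fun y z => by simp [mul_add, Complex.exp_add] }
  have hχ : Function.Injective χ := fun a b hab => by
    have := congr($hab (Multiplicative.ofAdd 1))
    simpa [χ, ← Complex.ofReal_exp] using this
  exact (linearIndependent_monoidHom (Multiplicative ℝ) ℂ).comp χ hχ

theorem Complex.analyticOnNhd_exp_ofReal_mul (a : ℝ) :
    AnalyticOnNhd ℝ (fun y : ℝ => Complex.exp (a * y)) univ := fun y _ =>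
  analyticAt_cexp.restrictScalars.comp (analyticAt_const.mul (Complex.ofRealCLM.analyticAt y))

-- `ℝ × ℝ` carries the sup norm, so this bump is `1` on `[-1, 1]²`.
noncomputable def squareCutoff : ContDiffBump (0 : ℝ × ℝ) := ⟨1, 2, one_pos, one_lt_two⟩

noncomputable def cutoffExpKernel (p : ℝ × ℝ) : ℂ := squareCutoff p * Complex.exp (p.1 * p.2)

theorem contDiff_cutoffExpKernel : ContDiff ℝ (⊤ : ℕ∞) cutoffExpKernel := by
  have hofReal : ContDiff ℝ (⊤ : ℕ∞) ((↑) : ℝ → ℂ) := Complex.ofRealCLM.contDiff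
  exact (hofReal.comp squareCutoff.contDiff).mul
    ((hofReal.comp contDiff_fst).mul (hofReal.comp contDiff_snd)).cexp

theorem hasCompactSupport_cutoffExpKernel : HasCompactSupport cutoffExpKernel :=
  (squareCutoff.hasCompactSupport.comp_left Complex.ofReal_zero).mul_right

theorem cutoffExpKernel_of_mem_closedBall {p : ℝ × ℝ} (hp : p ∈ closedBall 0 1) :
    cutoffExpKernel p = Complex.exp (p.1 * p.2) := by
  simp [cutoffExpKernel, squareCutoff.one_of_mem_closedBall hp]

noncomputable def cutoffExpSlice (a : closedBall (0 : ℝ) 1) : TestD :=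
  ⟨fun y => cutoffExpKernel (a, y),
    slice_mem _ contDiff_cutoffExpKernel hasCompactSupport_cutoffExpKernel a⟩

theorem cutoffExpSlice_restrict_ball :
    (LinearMap.funLeft ℂ ℂ ((↑) : ball (0 : ℝ) 1 → ℝ) ∘ₗ TestD.subtype) ∘ cutoffExpSlice =
      fun (a : closedBall (0 : ℝ) 1) (y : ball (0 : ℝ) 1) =>
        Complex.exp ((a : ℝ) * (y : ℝ)) := by
  ext ⟨a, ha⟩ ⟨y, hy⟩
  rw [mem_closedBall_zero_iff, Real.norm_eq_abs] at ha
  rw [mem_ball_zero_iff, Real.norm_eq_abs] at hy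
  exact cutoffExpKernel_of_mem_closedBall (by simp [Prod.norm_def, ha, hy.le])

theorem linearIndependent_cutoffExpSlice : LinearIndependent ℂ cutoffExpSlice := by
  refine .of_comp (LinearMap.funLeft ℂ ℂ ((↑) : ball (0 : ℝ) 1 → ℝ) ∘ₗ TestD.subtype) ?_
  rw [cutoffExpSlice_restrict_ball]
  exact (Complex.linearIndependent_exp_ofReal_mul.comp
    ((↑) : closedBall (0 : ℝ) 1 → ℝ) Subtype.val_injective).restrict_of_analyticOnNhd
    (fun a => Complex.analyticOnNhd_exp_ofReal_mul a) (ball_mem_nhds (0 : ℝ) one_pos)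

/-- There are a linear functional `T ∈ D*(ℝ)` and a test function
`Χ ∈ D(ℝ²)` such that `x ↦ T(y ↦ Χ(x,y))` is not continuous: the map
required for the definition of the tensor product does not exist in the
algebraic dual. -/
theorem exists_tensor_slice_map_not_continuous :
    ∃ (T : TestD →ₗ[ℂ] ℂ) (Χ : ℝ × ℝ → ℂ)
      (h1 : ContDiff ℝ (⊤ : ℕ∞) Χ) (h2 : HasCompactSupport Χ),
      ¬ ContinuousAt
          (fun x : ℝ => T ⟨fun y : ℝ => Χ (x, y), slice_mem Χ h1 h2 x⟩) 0 := by
  obtain ⟨T, hT⟩ := linearIndependent_cutoffExpSlice.exists_linearMap_apply_eq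
    fun a => if (a : ℝ) = 0 then (1 : ℂ) else 0
  refine ⟨T, cutoffExpKernel, contDiff_cutoffExpKernel, hasCompactSupport_cutoffExpKernel,
    not_continuousAt_of_eventually_eq_of_ne (y := 0) ?_ ?_⟩
  · exact ((hT ⟨0, mem_closedBall_self zero_le_one⟩).trans (if_pos rfl)).trans_ne one_ne_zero
  · filter_upwards [self_mem_nhdsWithin,
      nhdsWithin_le_nhds (closedBall_mem_nhds (0 : ℝ) one_pos)] with x hx0 hx1
    exact (hT ⟨x, hx1⟩).trans (if_neg hx0)
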